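/- Let (u,v) be C² on the closure of Ω and P be C¹ on the closure of Ω, with ∂_x u + ∂_y v = 0 in Ω, u = v = 0 on {x = 0} ∪ {y = 0} ∪ {y = 2}, and on {x = L}: ∂_y u + ∂_x v = 0 and P = 2ε ∂_x u. Then ∫_Ω (−εΔu) u + ∫_Ω (−εΔv) v + ∫_Ω (u ∂_x P + v ∂_y P) = ε ∫_Ω ( |∂_y u|² + |∂_x v|² + 4|∂_y v|² + 2 (∂_x v)(∂_y u) ). -/

import Mathlib

open MeasureTheory Set Real Function

noncomputable section

/-- The channel domain `Ω = (0,L) × (0,2)`. -/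
def Omg (L : ℝ) : Set (ℝ × ℝ) := Ioo (0:ℝ) L ×ˢ Ioo (0:ℝ) 2

/-- Partial derivative in the first (x) variable of a curried function. -/
def pdx (f : ℝ → ℝ → ℝ) : ℝ → ℝ → ℝ := fun x y => deriv (fun s => f s y) x

/-- Partial derivative in the second (y) variable of a curried function. -/
def pdy (f : ℝ → ℝ → ℝ) : ℝ → ℝ → ℝ := fun x y => deriv (fun t => f x t) y

/-- Laplacian `Δ = ∂ₓₓ + ∂_{yy}`. -/
def plap (f : ℝ → ℝ → ℝ) : ℝ → ℝ → ℝ := fun x y => pdx (pdx f) x y + pdy (pdy f) x y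

/-- Integral over `Ω`. -/
def intO (L : ℝ) (F : ℝ → ℝ → ℝ) : ℝ := ∫ p in Omg L, F p.1 p.2

/-- `L²(Ω)` norm. -/
def l2 (L : ℝ) (f : ℝ → ℝ → ℝ) : ℝ := Real.sqrt (intO L fun x y => (f x y)^2)

/-- `L^∞(Ω)` (sup) norm. -/
def supO (L : ℝ) (f : ℝ → ℝ → ℝ) : ℝ := sSup ((fun p : ℝ × ℝ => |f p.1 p.2|) '' Omg L)

/-- `|∇f|²`. -/
def gradSq (f : ℝ → ℝ → ℝ) (x y : ℝ) : ℝ := (pdx f x y)^2 + (pdy f x y)^2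

/-- Energy norm `‖u,v‖_E = ‖√ε ∇u‖_{L²(Ω)} + ‖√ε ∇v‖_{L²(Ω)}`. -/
def normE (ε L : ℝ) (u v : ℝ → ℝ → ℝ) : ℝ :=
  Real.sqrt (intO L fun x y => ε * gradSq u x y) + Real.sqrt (intO L fun x y => ε * gradSq v x y)

/-- Positivity norm `‖u,v‖_P = ‖√(u_s) ∇v‖_{L²(Ω)}`. -/
def normP (L : ℝ) (us v : ℝ → ℝ → ℝ) : ℝ :=
  Real.sqrt (intO L fun x y => us x y * gradSq v x y)

/-- The `X` norm `‖u,v‖_X = ‖u,v‖_E + ε^{γ/2}(‖√ε u‖_∞ + ‖√ε v‖_∞)`. -/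
def normX (ε γ L : ℝ) (u v : ℝ → ℝ → ℝ) : ℝ :=
  normE ε L u v + ε ^ (γ/2) *
    (supO L (fun x y => Real.sqrt ε * u x y) + supO L (fun x y => Real.sqrt ε * v x y))

/-- Linearized convection term `S_u`. -/
def Su (us vs u v : ℝ → ℝ → ℝ) (x y : ℝ) : ℝ :=
  us x y * pdx u x y + pdx us x y * u x y + pdy us x y * v x y + vs x y * pdy u x y

/-- Linearized convection term `S_v`. -/
def Sv (us vs u v : ℝ → ℝ → ℝ) (x y : ℝ) : ℝ :=
  us x y * pdx v x y + pdx vs x y * u x y + vs x y * pdy v x y + pdy vs x y * v x y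

/-- The `W^{100,∞}` norm of a function on `(0,2)`. -/
def W100 (h : ℝ → ℝ) : ℝ :=
  sSup { r : ℝ | ∃ j ≤ 100, ∃ y ∈ Ioo (0:ℝ) 2, r = |deriv^[j] h y| }

/-! Since `∂ₓu + ∂ᵧv = 0` (hence also `∂ₓ∂ᵧu = -∂ᵧ∂ᵧv`), the integrand on the left differs
pointwise from `ε` times the one on the right by the divergence of the explicit flux
`(energyFluxX, energyFluxY)`. Integrating over the rectangle leaves only boundary terms. They
vanish on the walls where `u = v = 0`; on the outflow wall `x = L` the stress-free conditions turn
the flux into the tangential derivative `-ε ∂ᵧ(u v)`, whose integral is zero because `u` and `v`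
vanish at the corners `(L, 0)` and `(L, 2)`. -/

section PartialDeriv

variable {f : ℝ → ℝ → ℝ} {x y : ℝ}

lemma hasDerivAt_fderiv_apply_one_zero (hf : DifferentiableAt ℝ (uncurry f) (x, y)) :
    HasDerivAt (fun s => f s y) (fderiv ℝ (uncurry f) (x, y) (1, 0)) x :=
  hf.hasFDerivAt.comp_hasDerivAt (f := fun s => (s, y)) x
    ((hasDerivAt_id x).prodMk (hasDerivAt_const x y))

lemma hasDerivAt_fderiv_apply_zero_one (hf : DifferentiableAt ℝ (uncurry f) (x, y)) :
    HasDerivAt (fun t => f x t) (fderiv ℝ (uncurry f) (x, y) (0, 1)) y :=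
  hf.hasFDerivAt.comp_hasDerivAt (f := fun t => (x, t)) y
    ((hasDerivAt_const y x).prodMk (hasDerivAt_id y))

lemma pdx_eq_fderiv (hf : DifferentiableAt ℝ (uncurry f) (x, y)) :
    pdx f x y = fderiv ℝ (uncurry f) (x, y) (1, 0) :=
  (hasDerivAt_fderiv_apply_one_zero hf).deriv

lemma pdy_eq_fderiv (hf : DifferentiableAt ℝ (uncurry f) (x, y)) :
    pdy f x y = fderiv ℝ (uncurry f) (x, y) (0, 1) :=
  (hasDerivAt_fderiv_apply_zero_one hf).deriv

lemma hasDerivAt_pdx (hf : DifferentiableAt ℝ (uncurry f) (x, y)) :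
    HasDerivAt (fun s => f s y) (pdx f x y) x :=
  pdx_eq_fderiv hf ▸ hasDerivAt_fderiv_apply_one_zero hf

lemma hasDerivAt_pdy (hf : DifferentiableAt ℝ (uncurry f) (x, y)) :
    HasDerivAt (fun t => f x t) (pdy f x y) y :=
  pdy_eq_fderiv hf ▸ hasDerivAt_fderiv_apply_zero_one hf

lemma uncurry_pdx (hf : Differentiable ℝ (uncurry f)) :
    uncurry (pdx f) = fun p => fderiv ℝ (uncurry f) p (1, 0) :=
  funext fun _ => pdx_eq_fderiv (hf _)

lemma uncurry_pdy (hf : Differentiable ℝ (uncurry f)) :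
    uncurry (pdy f) = fun p => fderiv ℝ (uncurry f) p (0, 1) :=
  funext fun _ => pdy_eq_fderiv (hf _)

lemma ContDiff.uncurry_pdx {n m : WithTop ℕ∞} (hf : ContDiff ℝ n (uncurry f)) (h : m + 1 ≤ n) :
    ContDiff ℝ m (uncurry (pdx f)) := by
  rw [_root_.uncurry_pdx (hf.differentiable (by rintro rfl; simp at h))]
  exact (hf.fderiv_right h).clm_apply contDiff_const

lemma ContDiff.uncurry_pdy {n m : WithTop ℕ∞} (hf : ContDiff ℝ n (uncurry f)) (h : m + 1 ≤ n) :
    ContDiff ℝ m (uncurry (pdy f)) := by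
  rw [_root_.uncurry_pdy (hf.differentiable (by rintro rfl; simp at h))]
  exact (hf.fderiv_right h).clm_apply contDiff_const

lemma pdx_pdy_comm (hf : ContDiff ℝ 2 (uncurry f)) (x y : ℝ) :
    pdx (pdy f) x y = pdy (pdx f) x y := by
  have hd : Differentiable ℝ (uncurry f) := hf.differentiable two_ne_zero
  have hd' : Differentiable ℝ (fderiv ℝ (uncurry f)) :=
    (hf.fderiv_right (m := 1) le_rfl).differentiable one_ne_zero
  have hx := (hf.uncurry_pdy (m := 1) le_rfl).differentiable one_ne_zero
  have hy := (hf.uncurry_pdx (m := 1) le_rfl).differentiable one_ne_zero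
  rw [pdx_eq_fderiv (hx _), pdy_eq_fderiv (hy _), _root_.uncurry_pdx hd, _root_.uncurry_pdy hd,
    fderiv_clm_apply (hd' _) (differentiableAt_const _),
    fderiv_clm_apply (hd' _) (differentiableAt_const _)]
  simpa using (hf.contDiffAt.isSymmSndFDerivAt (by simp)) (1, 0) (0, 1)

lemma ContDiff.continuous_uncurry_plap (hf : ContDiff ℝ 2 (uncurry f)) :
    Continuous (uncurry (plap f)) :=
  ((hf.uncurry_pdx (m := 1) le_rfl).uncurry_pdx (m := 0) le_rfl).continuous.add
    ((hf.uncurry_pdy (m := 1) le_rfl).uncurry_pdy (m := 0) le_rfl).continuous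

end PartialDeriv

section Integration

variable {L : ℝ}

lemma closure_Omg (hL : 0 < L) : closure (Omg L) = Icc 0 L ×ˢ Icc 0 2 := by
  rw [Omg, closure_prod_eq, closure_Ioo hL.ne, closure_Ioo two_ne_zero.symm]

lemma integrableOn_Omg {g : ℝ × ℝ → ℝ} (hg : Continuous g) : IntegrableOn g (Omg L) :=
  (hg.continuousOn.integrableOn_compact (isCompact_Icc.prod isCompact_Icc)).mono_set
    (prod_mono Ioo_subset_Icc_self Ioo_subset_Icc_self)

lemma intO_add {F G : ℝ → ℝ → ℝ} (hF : Continuous (uncurry F)) (hG : Continuous (uncurry G)) :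
    intO L (fun x y => F x y + G x y) = intO L F + intO L G :=
  integral_add (integrableOn_Omg hF) (integrableOn_Omg hG)

lemma intO_const_mul (c : ℝ) (F : ℝ → ℝ → ℝ) : intO L (fun x y => c * F x y) = c * intO L F :=
  integral_const_mul c _

lemma intO_congr {F G : ℝ → ℝ → ℝ} (h : ∀ p ∈ Omg L, F p.1 p.2 = G p.1 p.2) :
    intO L F = intO L G :=
  setIntegral_congr_fun (measurableSet_Ioo.prod measurableSet_Ioo) h

lemma setIntegral_Ioo_eq_intervalIntegral {a b : ℝ} (hab : a ≤ b) (g : ℝ → ℝ) :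
    ∫ t in Ioo a b, g t = ∫ t in a..b, g t := by
  rw [intervalIntegral.integral_of_le hab, integral_Ioc_eq_integral_Ioo]

lemma intO_eq_intervalIntegral (hL : 0 ≤ L) {F : ℝ → ℝ → ℝ} (hF : Continuous (uncurry F)) :
    intO L F = ∫ x in 0..L, ∫ y in 0..2, F x y := by
  rw [intO, Omg, Measure.volume_eq_prod,
    setIntegral_prod (fun p : ℝ × ℝ => F p.1 p.2) (integrableOn_Omg hF),
    setIntegral_Ioo_eq_intervalIntegral hL]
  simp only [setIntegral_Ioo_eq_intervalIntegral zero_le_two]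

lemma intO_eq_intervalIntegral_swap (hL : 0 ≤ L) {F : ℝ → ℝ → ℝ} (hF : Continuous (uncurry F)) :
    intO L F = ∫ y in 0..2, ∫ x in 0..L, F x y := by
  rw [intO, Omg, Measure.volume_eq_prod, ← setIntegral_prod_swap,
    setIntegral_prod (fun p : ℝ × ℝ => F p.swap.1 p.swap.2) (integrableOn_Omg hF).swap,
    setIntegral_Ioo_eq_intervalIntegral zero_le_two]
  simp only [setIntegral_Ioo_eq_intervalIntegral hL, Prod.swap]

lemma intO_pdx (hL : 0 ≤ L) {W : ℝ → ℝ → ℝ} (hW : ContDiff ℝ 1 (uncurry W)) :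
    intO L (pdx W) = ∫ y in 0..2, (W L y - W 0 y) := by
  have hcont : Continuous (uncurry (pdx W)) := (hW.uncurry_pdx (m := 0) le_rfl).continuous
  rw [intO_eq_intervalIntegral_swap hL hcont]
  refine intervalIntegral.integral_congr fun y _ => ?_
  refine intervalIntegral.integral_eq_sub_of_hasDerivAt
    (fun x _ => hasDerivAt_pdx (hW.differentiable one_ne_zero _)) ?_
  exact (hcont.comp (continuous_id.prodMk continuous_const)).intervalIntegrable 0 L

lemma intO_pdy (hL : 0 ≤ L) {W : ℝ → ℝ → ℝ} (hW : ContDiff ℝ 1 (uncurry W)) :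
    intO L (pdy W) = ∫ x in 0..L, (W x 2 - W x 0) := by
  have hcont : Continuous (uncurry (pdy W)) := (hW.uncurry_pdy (m := 0) le_rfl).continuous
  rw [intO_eq_intervalIntegral hL hcont]
  refine intervalIntegral.integral_congr fun x _ => ?_
  refine intervalIntegral.integral_eq_sub_of_hasDerivAt
    (fun y _ => hasDerivAt_pdy (hW.differentiable one_ne_zero _)) ?_
  exact (hcont.comp (continuous_const.prodMk continuous_id)).intervalIntegrable 0 2

end Integration

section EnergyFlux

def energyFluxX (ε : ℝ) (u v P : ℝ → ℝ → ℝ) : ℝ → ℝ → ℝ := fun x y =>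
  -(ε * (pdx u x y * u x y + pdx v x y * v x y)) + P x y * u x y - 2 * ε * (v x y * pdy u x y)

def energyFluxY (ε : ℝ) (u v P : ℝ → ℝ → ℝ) : ℝ → ℝ → ℝ := fun x y =>
  -(ε * (pdy u x y * u x y + pdy v x y * v x y)) + P x y * v x y - 2 * ε * (v x y * pdy v x y)

variable {ε : ℝ} {u v P : ℝ → ℝ → ℝ}

lemma contDiff_uncurry_energyFluxX (hu : ContDiff ℝ 2 (uncurry u))
    (hv : ContDiff ℝ 2 (uncurry v)) (hP : ContDiff ℝ 1 (uncurry P)) :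
    ContDiff ℝ 1 (uncurry (energyFluxX ε u v P)) := by
  have := hu.of_le one_le_two
  have := hv.of_le one_le_two
  have := hu.uncurry_pdx (m := 1) le_rfl
  have := hv.uncurry_pdx (m := 1) le_rfl
  have := hu.uncurry_pdy (m := 1) le_rfl
  unfold energyFluxX
  fun_prop

lemma contDiff_uncurry_energyFluxY (hu : ContDiff ℝ 2 (uncurry u))
    (hv : ContDiff ℝ 2 (uncurry v)) (hP : ContDiff ℝ 1 (uncurry P)) :
    ContDiff ℝ 1 (uncurry (energyFluxY ε u v P)) := by
  have := hu.of_le one_le_two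
  have := hv.of_le one_le_two
  have := hu.uncurry_pdy (m := 1) le_rfl
  have := hv.uncurry_pdy (m := 1) le_rfl
  unfold energyFluxY
  fun_prop

lemma pdx_energyFluxX (hu : ContDiff ℝ 2 (uncurry u)) (hv : ContDiff ℝ 2 (uncurry v))
    (hP : ContDiff ℝ 1 (uncurry P)) (x y : ℝ) :
    pdx (energyFluxX ε u v P) x y =
      -(ε * ((pdx (pdx u) x y * u x y + pdx u x y * pdx u x y)
            + (pdx (pdx v) x y * v x y + pdx v x y * pdx v x y)))
        + (pdx P x y * u x y + P x y * pdx u x y)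
        - 2 * ε * (pdx v x y * pdy u x y + v x y * pdx (pdy u) x y) := by
  have hU := hasDerivAt_pdx (x := x) (y := y) (hu.differentiable two_ne_zero _)
  have hV := hasDerivAt_pdx (x := x) (y := y) (hv.differentiable two_ne_zero _)
  have hP' := hasDerivAt_pdx (x := x) (y := y) (hP.differentiable one_ne_zero _)
  have hUx := hasDerivAt_pdx (x := x) (y := y)
    ((hu.uncurry_pdx (m := 1) le_rfl).differentiable one_ne_zero _)
  have hVx := hasDerivAt_pdx (x := x) (y := y)
    ((hv.uncurry_pdx (m := 1) le_rfl).differentiable one_ne_zero _)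
  have hUy := hasDerivAt_pdx (x := x) (y := y)
    ((hu.uncurry_pdy (m := 1) le_rfl).differentiable one_ne_zero _)
  exact (((((hUx.mul hU).add (hVx.mul hV)).const_mul ε).neg.add (hP'.mul hU)).sub
    ((hV.mul hUy).const_mul (2 * ε))).deriv

lemma pdy_energyFluxY (hu : ContDiff ℝ 2 (uncurry u)) (hv : ContDiff ℝ 2 (uncurry v))
    (hP : ContDiff ℝ 1 (uncurry P)) (x y : ℝ) :
    pdy (energyFluxY ε u v P) x y =
      -(ε * ((pdy (pdy u) x y * u x y + pdy u x y * pdy u x y)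
            + (pdy (pdy v) x y * v x y + pdy v x y * pdy v x y)))
        + (pdy P x y * v x y + P x y * pdy v x y)
        - 2 * ε * (pdy v x y * pdy v x y + v x y * pdy (pdy v) x y) := by
  have hU := hasDerivAt_pdy (x := x) (y := y) (hu.differentiable two_ne_zero _)
  have hV := hasDerivAt_pdy (x := x) (y := y) (hv.differentiable two_ne_zero _)
  have hP' := hasDerivAt_pdy (x := x) (y := y) (hP.differentiable one_ne_zero _)
  have hUy := hasDerivAt_pdy (x := x) (y := y)
    ((hu.uncurry_pdy (m := 1) le_rfl).differentiable one_ne_zero _)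
  have hVy := hasDerivAt_pdy (x := x) (y := y)
    ((hv.uncurry_pdy (m := 1) le_rfl).differentiable one_ne_zero _)
  exact (((((hUy.mul hU).add (hVy.mul hV)).const_mul ε).neg.add (hP'.mul hV)).sub
    ((hV.mul hVy).const_mul (2 * ε))).deriv

end EnergyFlux

section Incompressible

variable {u v : ℝ → ℝ → ℝ}

lemma pdy_pdx_eq_neg_of_div {U : Set (ℝ × ℝ)} (hU : IsOpen U)
    (hdiv : ∀ p ∈ U, pdx u p.1 p.2 + pdy v p.1 p.2 = 0) {x y : ℝ} (hxy : (x, y) ∈ U) :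
    pdy (pdx u) x y = -pdy (pdy v) x y := by
  have hnhds : ∀ᶠ t in nhds y, (x, t) ∈ U :=
    (continuous_const.prodMk continuous_id).continuousAt.preimage_mem_nhds (hU.mem_nhds hxy)
  have hslice : (fun t => pdx u x t) =ᶠ[nhds y] fun t => -pdy v x t := by
    filter_upwards [hnhds] with t ht
    exact eq_neg_of_add_eq_zero_left (hdiv _ ht)
  exact hslice.deriv_eq.trans deriv.fun_neg

lemma div_eq_zero_of_mem_closure (hu : ContDiff ℝ 1 (uncurry u)) (hv : ContDiff ℝ 1 (uncurry v))
    {s : Set (ℝ × ℝ)} (hdiv : ∀ p ∈ s, pdx u p.1 p.2 + pdy v p.1 p.2 = 0) {p : ℝ × ℝ}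
    (hp : p ∈ closure s) : pdx u p.1 p.2 + pdy v p.1 p.2 = 0 := by
  have := (hu.uncurry_pdx (m := 0) le_rfl).continuous
  have := (hv.uncurry_pdy (m := 0) le_rfl).continuous
  exact EqOn.closure (f := fun p : ℝ × ℝ => pdx u p.1 p.2 + pdy v p.1 p.2) (g := 0) hdiv
    (by fun_prop) continuous_const hp

end Incompressible

section EnergyIdentity

variable {L ε : ℝ} {u v P : ℝ → ℝ → ℝ}

lemma energy_integrand_eq (hu : ContDiff ℝ 2 (uncurry u)) (hv : ContDiff ℝ 2 (uncurry v))
    (hP : ContDiff ℝ 1 (uncurry P)) {U : Set (ℝ × ℝ)} (hU : IsOpen U)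
    (hdiv : ∀ p ∈ U, pdx u p.1 p.2 + pdy v p.1 p.2 = 0) {x y : ℝ} (hxy : (x, y) ∈ U) :
    -(ε * plap u x y) * u x y + -(ε * plap v x y) * v x y
        + (u x y * pdx P x y + v x y * pdy P x y)
      = ε * ((pdy u x y)^2 + (pdx v x y)^2 + 4 * (pdy v x y)^2 + 2 * pdx v x y * pdy u x y)
        + (pdx (energyFluxX ε u v P) x y + pdy (energyFluxY ε u v P) x y) := by
  simp only [plap]
  rw [pdx_energyFluxX hu hv hP, pdy_energyFluxY hu hv hP, pdx_pdy_comm hu,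
    pdy_pdx_eq_neg_of_div hU hdiv hxy]
  linear_combination (ε * (pdx u x y - pdy v x y) - P x y) * hdiv _ hxy

lemma intO_energy_eq (hu : ContDiff ℝ 2 (uncurry u)) (hv : ContDiff ℝ 2 (uncurry v))
    (hP : ContDiff ℝ 1 (uncurry P)) (hdiv : ∀ p ∈ Omg L, pdx u p.1 p.2 + pdy v p.1 p.2 = 0) :
    intO L (fun x y => -(ε * plap u x y) * u x y)
      + intO L (fun x y => -(ε * plap v x y) * v x y)
      + intO L (fun x y => u x y * pdx P x y + v x y * pdy P x y)
    = ε * intO L (fun x y =>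
        (pdy u x y)^2 + (pdx v x y)^2 + 4 * (pdy v x y)^2 + 2 * (pdx v x y) * (pdy u x y))
      + (intO L (pdx (energyFluxX ε u v P)) + intO L (pdy (energyFluxY ε u v P))) := by
  have := hu.continuous
  have := hv.continuous
  have := hu.continuous_uncurry_plap
  have := hv.continuous_uncurry_plap
  have := (hu.uncurry_pdy (m := 0) one_le_two).continuous
  have := (hv.uncurry_pdx (m := 0) one_le_two).continuous
  have := (hv.uncurry_pdy (m := 0) one_le_two).continuous
  have := (hP.uncurry_pdx (m := 0) le_rfl).continuous
  have := (hP.uncurry_pdy (m := 0) le_rfl).continuous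
  have := ((contDiff_uncurry_energyFluxX (ε := ε) hu hv hP).uncurry_pdx (m := 0) le_rfl).continuous
  have := ((contDiff_uncurry_energyFluxY (ε := ε) hu hv hP).uncurry_pdy (m := 0) le_rfl).continuous
  have hOpen : IsOpen (Omg L) := isOpen_Ioo.prod isOpen_Ioo
  calc _ = intO L (fun x y => -(ε * plap u x y) * u x y + -(ε * plap v x y) * v x y
              + (u x y * pdx P x y + v x y * pdy P x y)) := by
          rw [← intO_add, ← intO_add] <;> fun_prop
    _ = intO L (fun x y => ε * ((pdy u x y)^2 + (pdx v x y)^2 + 4 * (pdy v x y)^2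
              + 2 * pdx v x y * pdy u x y)
            + (pdx (energyFluxX ε u v P) x y + pdy (energyFluxY ε u v P) x y)) :=
          intO_congr fun _ hp => energy_integrand_eq hu hv hP hOpen hdiv hp
    _ = _ := by
          rw [← intO_add, ← intO_const_mul, ← intO_add] <;> fun_prop

lemma intO_pdx_energyFluxX_eq_zero (hL : 0 < L) (hu : ContDiff ℝ 2 (uncurry u))
    (hv : ContDiff ℝ 2 (uncurry v)) (hP : ContDiff ℝ 1 (uncurry P))
    (hdivL : ∀ y ∈ Icc (0:ℝ) 2, pdx u L y + pdy v L y = 0)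
    (hbcx0 : ∀ y ∈ Icc (0:ℝ) 2, u 0 y = 0 ∧ v 0 y = 0)
    (hbcL : ∀ y ∈ Icc (0:ℝ) 2, pdy u L y + pdx v L y = 0 ∧ P L y = 2 * ε * pdx u L y)
    (hcorner : u L 0 = 0 ∧ v L 0 = 0 ∧ u L 2 = 0 ∧ v L 2 = 0) :
    intO L (pdx (energyFluxX ε u v P)) = 0 := by
  have hboundary : ∀ y ∈ uIcc (0:ℝ) 2, energyFluxX ε u v P L y - energyFluxX ε u v P 0 y
      = -ε * (pdy u L y * v L y + u L y * pdy v L y) := by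
    intro y hy
    rw [uIcc_of_le zero_le_two] at hy
    obtain ⟨hstress, hpressure⟩ := hbcL y hy
    obtain ⟨hu0, hv0⟩ := hbcx0 y hy
    simp only [energyFluxX]
    rw [hu0, hv0, hpressure]
    linear_combination ε * u L y * hdivL y hy - ε * v L y * hstress
  have hderiv : ∀ y ∈ uIcc (0:ℝ) 2, HasDerivAt (fun t => -ε * (u L t * v L t))
      (-ε * (pdy u L y * v L y + u L y * pdy v L y)) y := fun y _ =>
    ((hasDerivAt_pdy (hu.differentiable two_ne_zero _)).mul
      (hasDerivAt_pdy (hv.differentiable two_ne_zero _))).const_mul (-ε)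
  have := hu.continuous
  have := hv.continuous
  have := (hu.uncurry_pdy (m := 0) one_le_two).continuous
  have := (hv.uncurry_pdy (m := 0) one_le_two).continuous
  rw [intO_pdx hL.le (contDiff_uncurry_energyFluxX hu hv hP),
    intervalIntegral.integral_congr hboundary,
    intervalIntegral.integral_eq_sub_of_hasDerivAt hderiv
      (Continuous.intervalIntegrable (by fun_prop) _ _)]
  simp [hcorner]

lemma intO_pdy_energyFluxY_eq_zero (hL : 0 ≤ L) (hu : ContDiff ℝ 2 (uncurry u))
    (hv : ContDiff ℝ 2 (uncurry v)) (hP : ContDiff ℝ 1 (uncurry P))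
    (hbcy : ∀ x ∈ Icc (0:ℝ) L, u x 0 = 0 ∧ v x 0 = 0 ∧ u x 2 = 0 ∧ v x 2 = 0) :
    intO L (pdy (energyFluxY ε u v P)) = 0 := by
  rw [intO_pdy hL (contDiff_uncurry_energyFluxY hu hv hP)]
  refine (intervalIntegral.integral_congr fun x hx => ?_).trans intervalIntegral.integral_zero
  rw [uIcc_of_le hL] at hx
  obtain ⟨hu0, hv0, hu2, hv2⟩ := hbcy x hx
  simp [energyFluxY, hu0, hv0, hu2, hv2]

end EnergyIdentity

theorem stmt13_general (L ε : ℝ) (hL0 : 0 < L)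
    (u v P : ℝ → ℝ → ℝ)
    (hu : ContDiff ℝ 2 (uncurry u)) (hv : ContDiff ℝ 2 (uncurry v))
    (hP : ContDiff ℝ 1 (uncurry P))
    (hdiv : ∀ p ∈ Omg L, pdx u p.1 p.2 + pdy v p.1 p.2 = 0)
    (hbcx0 : ∀ y ∈ Icc (0:ℝ) 2, u 0 y = 0 ∧ v 0 y = 0)
    (hbcy : ∀ x ∈ Icc (0:ℝ) L, u x 0 = 0 ∧ v x 0 = 0 ∧ u x 2 = 0 ∧ v x 2 = 0)
    (hbcL : ∀ y ∈ Icc (0:ℝ) 2, pdy u L y + pdx v L y = 0 ∧ P L y = 2 * ε * pdx u L y) :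
    intO L (fun x y => -(ε * plap u x y) * u x y)
      + intO L (fun x y => -(ε * plap v x y) * v x y)
      + intO L (fun x y => u x y * pdx P x y + v x y * pdy P x y)
    = ε * intO L (fun x y =>
        (pdy u x y)^2 + (pdx v x y)^2 + 4 * (pdy v x y)^2
          + 2 * (pdx v x y) * (pdy u x y)) := by
  have hdivL : ∀ y ∈ Icc (0:ℝ) 2, pdx u L y + pdy v L y = 0 := fun y hy =>
    div_eq_zero_of_mem_closure (hu.of_le one_le_two) (hv.of_le one_le_two) hdiv
      (p := (L, y)) (closure_Omg hL0 ▸ ⟨right_mem_Icc.2 hL0.le, hy⟩)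
  rw [intO_energy_eq hu hv hP hdiv,
    intO_pdx_energyFluxX_eq_zero hL0 hu hv hP hdivL hbcx0 hbcL (hbcy L (right_mem_Icc.2 hL0.le)),
    intO_pdy_energyFluxY_eq_zero hL0.le hu hv hP hbcy, add_zero, add_zero]

/-- the energy identity for the viscous and pressure terms under the
multiplier `(u,v)`, using the stress-free outflow conditions. -/
theorem stmt13 (L ε : ℝ) (hL0 : 0 < L) (hL1 : L ≤ 1) (hε0 : 0 < ε) (hε1 : ε < 1)
    (u v P : ℝ → ℝ → ℝ)
    (hu : ContDiff ℝ 2 (uncurry u)) (hv : ContDiff ℝ 2 (uncurry v))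
    (hP : ContDiff ℝ 1 (uncurry P))
    (hdiv : ∀ p ∈ Omg L, pdx u p.1 p.2 + pdy v p.1 p.2 = 0)
    (hbcx0 : ∀ y ∈ Icc (0:ℝ) 2, u 0 y = 0 ∧ v 0 y = 0)
    (hbcy : ∀ x ∈ Icc (0:ℝ) L, u x 0 = 0 ∧ v x 0 = 0 ∧ u x 2 = 0 ∧ v x 2 = 0)
    (hbcL : ∀ y ∈ Icc (0:ℝ) 2, pdy u L y + pdx v L y = 0 ∧ P L y = 2 * ε * pdx u L y) :
    intO L (fun x y => -(ε * plap u x y) * u x y)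
      + intO L (fun x y => -(ε * plap v x y) * v x y)
      + intO L (fun x y => u x y * pdx P x y + v x y * pdy P x y)
    = ε * intO L (fun x y =>
        (pdy u x y)^2 + (pdx v x y)^2 + 4 * (pdy v x y)^2
          + 2 * (pdx v x y) * (pdy u x y)) :=
  stmt13_general L ε hL0 u v P hu hv hP hdiv hbcx0 hbcy hbcL
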